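/- arXiv:1108.5844 — 4 statements merged into one kernel-verified Lean document; each statement's English description precedes it below -/
import Mathlib

section
/- Let k₀ ≥ 0 (with k₀ > 0) and let ω : [k₀, ∞) → ℝ be nonnegative and non-increasing. Suppose there are constants γ, β > 0 and a non-decreasing function M : [k₀, ∞) → ℝ with 0 ≤ M(k) ≤ M₀·k^γ for all k ≥ k₀, such that ω(k̂) ≤ M(k)(k̂ − k)^{−γ} ω(k)^{1+β} for all k̂ > k ≥ k₀. Then ω(k*) = 0, where k* = 2k₀(1 + 2^{(1+2β)/β²} M₀^{(1+β)/(βγ)} ω(k₀)^{(1+β)/γ}). -/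
/-!
Put `K = k*` and climb from `K/2 = k₀(1 + A)` to `K` along the levels `ℓₙ = K - K/2ⁿ⁺¹`.
Since `ℓₙ₊₁ - ℓₙ = K/2ⁿ⁺²` and `M(ℓₙ) ≤ M(K) ≤ M₀ K^γ`, the hypothesis gives
`ω(ℓₙ₊₁) ≤ C bⁿ ω(ℓₙ)^(1+β)` with `C = 4^γ M₀` and `b = 2^γ`. Such a recursion forces
`yₙ ≤ y₀ b^(-n/β) → 0` as soon as `C y₀^β b^(1/β) ≤ 1`, and one application of the hypothesis
between `k₀` and `k₀(1 + A)` shows that the constant `A` in `k*` is chosen to give exactly this.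
Hence `ω(k*) ≤ ω(ℓₙ) → 0`.
-/

open Filter Topology

theorem le_div_pow_of_succ_le_mul_pow_mul_rpow {y : ℕ → ℝ} {C b β : ℝ}
    (hy : ∀ n, 0 ≤ y n) (hC : 0 ≤ C) (hb : 0 < b) (hβ : 0 < β)
    (hrec : ∀ n, y (n + 1) ≤ C * b ^ n * y n ^ (1 + β))
    (hy₀ : C * y 0 ^ β * b ^ β⁻¹ ≤ 1) (n : ℕ) :
    y n ≤ y 0 / (b ^ β⁻¹) ^ n := by
  set q := b ^ β⁻¹
  have hq : 0 < q := by positivity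
  have hqβ (n : ℕ) : (q ^ n) ^ β = b ^ n := by
    rw [← Real.rpow_pow_comm hq.le, Real.rpow_inv_rpow hb.le hβ.ne']
  induction n with
  | zero => simp
  | succ n ih =>
    calc y (n + 1) ≤ C * b ^ n * (y 0 / q ^ n) ^ (1 + β) := by
          grw [hrec n, ih]; exact hy n
      _ = C * y 0 ^ β * q * (y 0 / q ^ (n + 1)) := by
          rw [Real.div_rpow (hy 0) (by positivity), Real.rpow_add' (hy 0) (by positivity),
            Real.rpow_add' (by positivity) (by positivity), Real.rpow_one, Real.rpow_one, hqβ]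
          field_simp
          ring
      _ ≤ y 0 / q ^ (n + 1) := mul_le_of_le_one_left (div_nonneg (hy 0) (pow_pos hq _).le) hy₀

theorem tendsto_zero_of_succ_le_mul_pow_mul_rpow {y : ℕ → ℝ} {C b β : ℝ}
    (hy : ∀ n, 0 ≤ y n) (hC : 0 ≤ C) (hb : 1 < b) (hβ : 0 < β)
    (hrec : ∀ n, y (n + 1) ≤ C * b ^ n * y n ^ (1 + β))
    (hy₀ : C * y 0 ^ β * b ^ β⁻¹ ≤ 1) : Tendsto y atTop (𝓝 0) := by
  have hq : 1 < b ^ β⁻¹ := Real.one_lt_rpow hb (inv_pos.2 hβ)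
  have hgeom : Tendsto (fun n : ℕ => y 0 / (b ^ β⁻¹) ^ n) atTop (𝓝 0) := by
    simpa [div_eq_mul_inv, ← inv_pow] using
      (tendsto_pow_atTop_nhds_zero_of_lt_one (inv_pos.2 (by linarith)).le
        (inv_lt_one_of_one_lt₀ hq)).const_mul (y 0)
  exact squeeze_zero hy
    (le_div_pow_of_succ_le_mul_pow_mul_rpow hy hC (by linarith) hβ hrec hy₀) hgeom

theorem Real.rpow_mul_div_rpow_neg {x c : ℝ} (hx : 0 < x) (hc : 0 < c) (γ : ℝ) :
    x ^ γ * (x / c) ^ (-γ) = c ^ γ := by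
  rw [Real.rpow_neg (by positivity), Real.div_rpow hx.le hc.le]
  have : 0 < x ^ γ := by positivity
  field_simp

namespace Stampacchia

noncomputable def dyadicLevel (K : ℝ) (n : ℕ) : ℝ := K - K / 2 ^ (n + 1)

section dyadicLevel

variable {K : ℝ}

theorem dyadicLevel_zero (K : ℝ) : dyadicLevel K 0 = K / 2 := by
  simp only [dyadicLevel]; ring

theorem dyadicLevel_succ_sub (K : ℝ) (n : ℕ) :
    dyadicLevel K (n + 1) - dyadicLevel K n = K / 2 ^ (n + 2) := by
  simp only [dyadicLevel]; field_simp; ring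

theorem dyadicLevel_lt_succ (hK : 0 < K) (n : ℕ) : dyadicLevel K n < dyadicLevel K (n + 1) := by
  have := dyadicLevel_succ_sub K n
  have : 0 < K / 2 ^ (n + 2) := by positivity
  linarith

theorem half_le_dyadicLevel (hK : 0 ≤ K) (n : ℕ) : K / 2 ≤ dyadicLevel K n := by
  have : K / 2 ^ (n + 1) ≤ K / 2 := by
    gcongr
    exact le_self_pow₀ one_le_two (by omega)
  simp only [dyadicLevel]; linarith

theorem dyadicLevel_le (hK : 0 ≤ K) (n : ℕ) : dyadicLevel K n ≤ K := by
  simp only [dyadicLevel]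
  have : 0 ≤ K / 2 ^ (n + 1) := by positivity
  linarith

end dyadicLevel

noncomputable def gap (γ β M₀ w : ℝ) : ℝ :=
  2 ^ ((1 + 2 * β) / β ^ 2) * M₀ ^ ((1 + β) / (β * γ)) * w ^ ((1 + β) / γ)

theorem gap_spec {γ β M₀ w : ℝ} (hγ : 0 < γ) (hβ : 0 < β) (hM₀ : 0 < M₀) (hw : 0 < w) :
    M₀ * (2 ^ γ) ^ 2 * (M₀ * gap γ β M₀ w ^ (-γ) * w ^ (1 + β)) ^ β * (2 ^ γ) ^ β⁻¹
      = 1 := by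
  refine Real.eq_one_of_pos_of_log_eq_zero (by unfold gap; positivity) ?_
  have h2 : (0 : ℝ) < 2 := two_pos
  simp (disch := positivity) only [gap, Real.log_mul, Real.log_rpow, Real.log_pow]
  field_simp
  ring

section StampacchiaIteration

variable {ω M : ℝ → ℝ} {k₀ γ β M₀ : ℝ}

theorem apply_mul_one_add_le {A : ℝ} (hk₀ : 0 < k₀) (hA : 0 < A) (hω₀ : 0 ≤ ω k₀)
    (hM_bound : ∀ k, k₀ ≤ k → M k ≤ M₀ * k ^ γ)
    (hrec : ∀ k khat, k₀ ≤ k → k < khat →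
      ω khat ≤ M k * (khat - k) ^ (-γ) * (ω k) ^ (1 + β)) :
    ω (k₀ * (1 + A)) ≤ M₀ * A ^ (-γ) * ω k₀ ^ (1 + β) := by
  have hstep : k₀ * (1 + A) - k₀ = k₀ / A⁻¹ := by field_simp; ring
  calc ω (k₀ * (1 + A)) ≤ M k₀ * (k₀ / A⁻¹) ^ (-γ) * ω k₀ ^ (1 + β) := by
        rw [← hstep]; exact hrec _ _ le_rfl (by nlinarith)
    _ ≤ M₀ * k₀ ^ γ * (k₀ / A⁻¹) ^ (-γ) * ω k₀ ^ (1 + β) := by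
        gcongr
        exact hM_bound k₀ le_rfl
    _ = M₀ * A ^ (-γ) * ω k₀ ^ (1 + β) := by
        rw [mul_assoc M₀, Real.rpow_mul_div_rpow_neg hk₀ (inv_pos.2 hA), Real.inv_rpow hA.le,
          Real.rpow_neg hA.le]

theorem apply_dyadicLevel_succ_le {K : ℝ} (hk₀ : 0 < k₀) (hK : 2 * k₀ ≤ K)
    (hω_nonneg : ∀ k, k₀ ≤ k → 0 ≤ ω k)
    (hM_mono : ∀ k k', k₀ ≤ k → k ≤ k' → M k ≤ M k')
    (hM_bound : ∀ k, k₀ ≤ k → M k ≤ M₀ * k ^ γ)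
    (hrec : ∀ k khat, k₀ ≤ k → k < khat →
      ω khat ≤ M k * (khat - k) ^ (-γ) * (ω k) ^ (1 + β)) (n : ℕ) :
    ω (dyadicLevel K (n + 1)) ≤
      M₀ * (2 ^ γ) ^ 2 * (2 ^ γ) ^ n * ω (dyadicLevel K n) ^ (1 + β) := by
  have hK_pos : 0 < K := by linarith
  have hk : k₀ ≤ dyadicLevel K n := by linarith [half_le_dyadicLevel hK_pos.le n]
  calc ω (dyadicLevel K (n + 1))
      ≤ M (dyadicLevel K n) * (K / 2 ^ (n + 2)) ^ (-γ) * ω (dyadicLevel K n) ^ (1 + β) := by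
        rw [← dyadicLevel_succ_sub]; exact hrec _ _ hk (dyadicLevel_lt_succ hK_pos n)
    _ ≤ M₀ * K ^ γ * (K / 2 ^ (n + 2)) ^ (-γ) * ω (dyadicLevel K n) ^ (1 + β) := by
        gcongr
        · exact Real.rpow_nonneg (hω_nonneg _ hk) _
        · exact (hM_mono _ _ hk (dyadicLevel_le hK_pos.le n)).trans (hM_bound K (by linarith))
    _ = M₀ * (2 ^ γ) ^ 2 * (2 ^ γ) ^ n * ω (dyadicLevel K n) ^ (1 + β) := by
        rw [mul_assoc M₀, Real.rpow_mul_div_rpow_neg hK_pos (by positivity),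
          ← Real.rpow_pow_comm zero_le_two, pow_add]
        ring

theorem first_level_small (hk₀ : 0 < k₀) (hγ : 0 < γ) (hβ : 0 < β) (hM₀ : 0 ≤ M₀)
    (hω_nonneg : ∀ k, k₀ ≤ k → 0 ≤ ω k)
    (hω_mono : ∀ k k', k₀ ≤ k → k ≤ k' → ω k' ≤ ω k)
    (hM_bound : ∀ k, k₀ ≤ k → M k ≤ M₀ * k ^ γ)
    (hrec : ∀ k khat, k₀ ≤ k → k < khat →
      ω khat ≤ M k * (khat - k) ^ (-γ) * (ω k) ^ (1 + β)) :
    M₀ * (2 ^ γ) ^ 2 * ω (k₀ * (1 + gap γ β M₀ (ω k₀))) ^ β * (2 ^ γ) ^ β⁻¹ ≤ 1 := by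
  set A := gap γ β M₀ (ω k₀)
  have hk : k₀ ≤ k₀ * (1 + A) := le_mul_of_one_le_right hk₀.le (by unfold A gap; bound)
  rcases hM₀.eq_or_lt with rfl | hM₀
  · simp
  rcases (hω_nonneg k₀ le_rfl).eq_or_lt with hω₀ | hω₀
  · have : ω (k₀ * (1 + A)) = 0 := le_antisymm (hω₀ ▸ hω_mono _ _ le_rfl hk) (hω_nonneg _ hk)
    simp [this, Real.zero_rpow hβ.ne']
  have hA : 0 < A := by unfold A gap; positivity
  calc M₀ * (2 ^ γ) ^ 2 * ω (k₀ * (1 + A)) ^ β * (2 ^ γ) ^ β⁻¹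
      ≤ M₀ * (2 ^ γ) ^ 2 * (M₀ * A ^ (-γ) * ω k₀ ^ (1 + β)) ^ β * (2 ^ γ) ^ β⁻¹ := by
        gcongr
        · exact hω_nonneg _ hk
        · exact apply_mul_one_add_le hk₀ hA hω₀.le hM_bound hrec
    _ = 1 := gap_spec hγ hβ hM₀ hω₀

end StampacchiaIteration

end Stampacchia

open Stampacchia

theorem stampacchia_lemma (k₀ γ β M₀ : ℝ) (ω M : ℝ → ℝ)
    (hk₀ : 0 < k₀) (hγ : 0 < γ) (hβ : 0 < β)
    (hω_nonneg : ∀ k, k₀ ≤ k → 0 ≤ ω k)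
    (hω_mono : ∀ k k', k₀ ≤ k → k ≤ k' → ω k' ≤ ω k)
    (hM_mono : ∀ k k', k₀ ≤ k → k ≤ k' → M k ≤ M k')
    (hM_nonneg : ∀ k, k₀ ≤ k → 0 ≤ M k)
    (hM_bound : ∀ k, k₀ ≤ k → M k ≤ M₀ * k ^ γ)
    (hrec : ∀ k khat, k₀ ≤ k → k < khat →
      ω khat ≤ M k * (khat - k) ^ (-γ) * (ω k) ^ (1 + β)) :
    ω (2 * k₀ * (1 + 2 ^ ((1 + 2 * β) / β ^ 2) * M₀ ^ ((1 + β) / (β * γ)) *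
      (ω k₀) ^ ((1 + β) / γ))) = 0 := by
  have hM₀ : 0 ≤ M₀ := nonneg_of_mul_nonneg_left
    ((hM_nonneg k₀ le_rfl).trans (hM_bound k₀ le_rfl)) (by positivity)
  change ω (2 * k₀ * (1 + gap γ β M₀ (ω k₀))) = 0
  set K := 2 * k₀ * (1 + gap γ β M₀ (ω k₀))
  have hK : 2 * k₀ ≤ K := le_mul_of_one_le_right (by positivity) (by unfold gap; bound)
  have hlevel (n : ℕ) : k₀ ≤ dyadicLevel K n := by
    linarith [half_le_dyadicLevel (K := K) (by linarith) n]
  have hlim : Tendsto (fun n => ω (dyadicLevel K n)) atTop (𝓝 0) := by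
    refine tendsto_zero_of_succ_le_mul_pow_mul_rpow (fun n => hω_nonneg _ (hlevel n))
      (by positivity) (Real.one_lt_rpow one_lt_two hγ) hβ
      (apply_dyadicLevel_succ_le hk₀ hK hω_nonneg hM_mono hM_bound hrec) ?_
    rw [dyadicLevel_zero, show K / 2 = k₀ * (1 + gap γ β M₀ (ω k₀)) by ring]
    exact first_level_small hk₀ hγ hβ hM₀ hω_nonneg hω_mono hM_bound hrec
  exact le_antisymm
    (ge_of_tendsto' hlim fun n => hω_mono _ _ (hlevel n) (dyadicLevel_le (by linarith) n))
    (hω_nonneg K (by linarith))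
end

section
/- For every real x ≥ 0 and every real r ≥ 2, x^r ≤ (1/r²)·x + (r−1)·r^{(2−r)/(r−1)}·x^{r+1}. -/
/-!
Weighted AM–GM with weights `1/r` and `(r-1)/r`, applied to `x / r` and `r ^ (1/(r-1)) * x ^ (r+1)`:
the geometric mean of these two numbers is exactly `x ^ r`, and the arithmetic mean is the
right-hand side. The factor `r ^ (1/(r-1))` is chosen so that the powers of `r` cancel in the
geometric mean, leaving the coefficient `1/r²` in front of `x`.
-/

namespace Real

lemma div_rpow_mul_rpow_eq_rpow {x r : ℝ} (hx : 0 ≤ x) (hr0 : 0 < r) (hr1 : r ≠ 1) :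
    (x / r) ^ (1 / r) * (r ^ (1 / (r - 1)) * x ^ (r + 1)) ^ ((r - 1) / r) = x ^ r := by
  have hr_pow : r ^ (1 / (r - 1) * ((r - 1) / r)) = r ^ (1 / r) := by
    congr 1; field_simp
  have hx_pow : x ^ (1 / r) * x ^ ((r + 1) * ((r - 1) / r)) = x ^ r := by
    have hsum : 1 / r + (r + 1) * ((r - 1) / r) = r := by field_simp; ring
    rw [← rpow_add' hx (by rw [hsum]; exact hr0.ne'), hsum]
  rw [div_rpow hx hr0.le, mul_rpow (by positivity) (by positivity), ← rpow_mul hr0.le,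
    ← rpow_mul hx, hr_pow, ← hx_pow]
  field_simp

lemma div_mul_rpow_inv_sub_one {r : ℝ} (hr0 : 0 < r) (hr1 : r ≠ 1) :
    (r - 1) / r * r ^ (1 / (r - 1)) = (r - 1) * r ^ ((2 - r) / (r - 1)) := by
  have hexp : (2 - r) / (r - 1) = 1 / (r - 1) - 1 := by
    field_simp; ring
  rw [hexp, rpow_sub hr0, rpow_one]
  ring

end Real

open Real in
theorem young_interpolation (x r : ℝ) (hx : 0 ≤ x) (hr : 2 ≤ r) :
    x ^ r ≤ (1 / r ^ 2) * x + (r - 1) * r ^ ((2 - r) / (r - 1)) * x ^ (r + 1) := by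
  have hr0 : 0 < r := by linarith
  have hr1 : 1 < r := by linarith
  have amgm := geom_mean_le_arith_mean2_weighted (w₁ := 1 / r) (w₂ := (r - 1) / r)
    (p₁ := x / r) (p₂ := r ^ (1 / (r - 1)) * x ^ (r + 1))
    (by positivity) (div_nonneg (by linarith) hr0.le) (by positivity) (by positivity)
    (by field_simp; ring)
  calc x ^ r = (x / r) ^ (1 / r) * (r ^ (1 / (r - 1)) * x ^ (r + 1)) ^ ((r - 1) / r) :=
        (div_rpow_mul_rpow_eq_rpow hx hr0 hr1.ne').symm
    _ ≤ 1 / r * (x / r) + (r - 1) / r * (r ^ (1 / (r - 1)) * x ^ (r + 1)) := amgm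
    _ = (1 / r ^ 2) * x + (r - 1) * r ^ ((2 - r) / (r - 1)) * x ^ (r + 1) := by
        rw [← mul_assoc, div_mul_rpow_inv_sub_one hr0 hr1.ne']
        ring
end

section
/- Let F : ℝ² → ℝ satisfy |F(n,p)| ≤ c₂(1 + |n| + |p|) for some c₂ > 0 and F(n,p) ≥ 0 for n,p ≥ 0. Let σ > 0 and define R̃(n,p,x) = F(n/(1+σn), p/(1+σp))·( (n/(1+σn))·(p/(1+σp)) − μ_n(x)μ_p(x) ) where 0 ≤ μ_n(x), μ_p(x) ≤ e^{−V_b}. Then for all n, p ≥ 0 and all x, |R̃(n,p,x)| ≤ c₂(1 + 2/σ)·μ_n(x)μ_p(x) + c₂(1/σ + 1/σ²)(n + p). -/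
/-!
The saturation `t ↦ t / (1 + σ t)` maps `[0, ∞)` into `[0, 1/σ]` and lies below the identity.
Hence the regularized densities `a, b` give `|F a b| ≤ c₂ (1 + 2/σ)`, while
`|a b - μₙ μₚ| ≤ a b + μₙ μₚ` and `a b ≤ (n + p) / (2σ)`, since `a b` is at most both
`n/σ` and `p/σ`.
-/

section Saturation

variable {σ t : ℝ}

lemma div_one_add_mul_nonneg (hσ : 0 ≤ σ) (ht : 0 ≤ t) : 0 ≤ t / (1 + σ * t) := by
  positivity

lemma div_one_add_mul_le_self (hσ : 0 ≤ σ) (ht : 0 ≤ t) : t / (1 + σ * t) ≤ t :=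
  div_le_self ht (le_add_of_nonneg_right (mul_nonneg hσ ht))

lemma div_one_add_mul_le_inv (hσ : 0 < σ) (ht : 0 ≤ t) : t / (1 + σ * t) ≤ σ⁻¹ := by
  rw [div_le_iff₀ (by positivity)]
  field_simp
  linarith

end Saturation

lemma mul_le_mul_add_div_two {a b n p K : ℝ} (ha : 0 ≤ a) (hb : 0 ≤ b) (haK : a ≤ K)
    (hbK : b ≤ K) (han : a ≤ n) (hbp : b ≤ p) : a * b ≤ K * (n + p) / 2 := by
  have hK : 0 ≤ K := ha.trans haK
  have h₁ : a * b ≤ K * p := mul_le_mul haK hbp hb hK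
  have h₂ : a * b ≤ n * K := mul_le_mul han hbK hb (ha.trans han)
  linarith

lemma abs_sub_le_add_of_nonneg {x y : ℝ} (hx : 0 ≤ x) (hy : 0 ≤ y) : |x - y| ≤ x + y := by
  simpa only [abs_of_nonneg hx, abs_of_nonneg hy] using abs_sub x y

theorem regularized_rate_linear_growth_general (F : ℝ → ℝ → ℝ) (c₂ σ Vb : ℝ)
    (hσ : 0 < σ)
    (hF_growth : ∀ n p : ℝ, |F n p| ≤ c₂ * (1 + |n| + |p|))
    (μn μp : EuclideanSpace ℝ (Fin 3) → ℝ)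
    (hμn : ∀ x, 0 ≤ μn x ∧ μn x ≤ Real.exp (-Vb))
    (hμp : ∀ x, 0 ≤ μp x ∧ μp x ≤ Real.exp (-Vb)) :
    ∀ (n p : ℝ) (x : EuclideanSpace ℝ (Fin 3)), 0 ≤ n → 0 ≤ p →
      |F (n / (1 + σ * n)) (p / (1 + σ * p)) *
        ((n / (1 + σ * n)) * (p / (1 + σ * p)) - μn x * μp x)| ≤
      c₂ * (1 + 2 / σ) * (μn x * μp x) + c₂ * (1 / σ + 1 / σ ^ 2) * (n + p) := by
  intro n p x hn hp
  set a := n / (1 + σ * n)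
  set b := p / (1 + σ * p)
  set M := μn x * μp x
  have hM : 0 ≤ M := mul_nonneg (hμn x).1 (hμp x).1
  have ha : 0 ≤ a := div_one_add_mul_nonneg hσ.le hn
  have hb : 0 ≤ b := div_one_add_mul_nonneg hσ.le hp
  have haσ : a ≤ σ⁻¹ := div_one_add_mul_le_inv hσ hn
  have hbσ : b ≤ σ⁻¹ := div_one_add_mul_le_inv hσ hp
  have hc₂ : 0 ≤ c₂ := by simpa using (abs_nonneg (F 0 0)).trans (hF_growth 0 0)
  have hF : |F a b| ≤ c₂ * (1 + 2 / σ) := by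
    refine (hF_growth a b).trans (mul_le_mul_of_nonneg_left ?_ hc₂)
    rw [abs_of_nonneg ha, abs_of_nonneg hb]
    linarith [div_eq_mul_inv 2 σ]
  have hab : a * b ≤ σ⁻¹ * (n + p) / 2 := mul_le_mul_add_div_two ha hb haσ hbσ
    (div_one_add_mul_le_self hσ.le hn) (div_one_add_mul_le_self hσ.le hp)
  have hcoeff : (1 + 2 / σ) * (σ⁻¹ * (n + p) / 2) ≤ (1 / σ + 1 / σ ^ 2) * (n + p) := by
    have : (1 / σ + 1 / σ ^ 2) * (n + p) - (1 + 2 / σ) * (σ⁻¹ * (n + p) / 2)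
        = (n + p) / (2 * σ) := by
      field_simp
      ring
    linarith [show 0 ≤ (n + p) / (2 * σ) by positivity]
  calc |F a b * (a * b - M)| = |F a b| * |a * b - M| := abs_mul _ _
    _ ≤ c₂ * (1 + 2 / σ) * (a * b + M) :=
        mul_le_mul hF (abs_sub_le_add_of_nonneg (mul_nonneg ha hb) hM) (abs_nonneg _)
          (by positivity)
    _ ≤ c₂ * (1 + 2 / σ) * M + c₂ * ((1 + 2 / σ) * (σ⁻¹ * (n + p) / 2)) := by
        linarith [mul_le_mul_of_nonneg_left hab (by positivity : (0 : ℝ) ≤ c₂ * (1 + 2 / σ))]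
    _ ≤ c₂ * (1 + 2 / σ) * M + c₂ * (1 / σ + 1 / σ ^ 2) * (n + p) := by
        linarith [mul_le_mul_of_nonneg_left hcoeff hc₂]

theorem regularized_rate_linear_growth (F : ℝ → ℝ → ℝ) (c₂ σ Vb : ℝ)
    (hc₂ : 0 < c₂) (hσ : 0 < σ)
    (hF_growth : ∀ n p : ℝ, |F n p| ≤ c₂ * (1 + |n| + |p|))
    (hF_nonneg : ∀ n p : ℝ, 0 ≤ n → 0 ≤ p → 0 ≤ F n p)
    (μn μp : EuclideanSpace ℝ (Fin 3) → ℝ)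
    (hμn : ∀ x, 0 ≤ μn x ∧ μn x ≤ Real.exp (-Vb))
    (hμp : ∀ x, 0 ≤ μp x ∧ μp x ≤ Real.exp (-Vb)) :
    ∀ (n p : ℝ) (x : EuclideanSpace ℝ (Fin 3)), 0 ≤ n → 0 ≤ p →
      |F (n / (1 + σ * n)) (p / (1 + σ * p)) *
        ((n / (1 + σ * n)) * (p / (1 + σ * p)) - μn x * μp x)| ≤
      c₂ * (1 + 2 / σ) * (μn x * μp x) + c₂ * (1 / σ + 1 / σ ^ 2) * (n + p) :=
  regularized_rate_linear_growth_general F c₂ σ Vb hσ hF_growth μn μp hμn hμp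
end

section
/- Let F : ℝ² → ℝ be Lipschitz with constant c₁ (i.e. |F(a₁,b₁) − F(a₂,b₂)| ≤ c₁(|a₁−a₂| + |b₁−b₂|)) and satisfy |F(a,b)| ≤ c₂(1+|a|+|b|). Fix σ > 0 and a point x where 0 ≤ μ_n(x), μ_p(x) ≤ e^{−V_b}. Define G(n,p) = F(n/(1+σn), p/(1+σp))·((n/(1+σn))(p/(1+σp)) − μ_n(x)μ_p(x)). Then for all nonnegative reals n₁,p₁,n₂,p₂: |G(n₁,p₁) − G(n₂,p₂)| ≤ K̃(|n₁−n₂| + |p₁−p₂|), where K̃ = 2c₁e^{−2V_b} + (2c₂/σ)(1 + 2/σ) + 2c₁/σ². -/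
/-!
Write `a = n/(1+σn)` and `b = p/(1+σp)`: they lie in `[0, 1/σ]`, and `t ↦ t/(1+σt)` is
1-Lipschitz on `[0, ∞)`. With `μ = μₙμₚ`, split
`F(a₁,b₁)(a₁b₁ - μ) - F(a₂,b₂)(a₂b₂ - μ) = F(a₁,b₁)(a₁b₁ - a₂b₂) + (F(a₁,b₁) - F(a₂,b₂))(a₂b₂ - μ)`.
On `[0, 1/σ]²` the growth bound gives `|F| ≤ c₂(1 + 2/σ)` and the product is `1/σ`-Lipschitz,
which handles the first term; the second is at most `c₁(|a₁-a₂| + |b₁-b₂|)(1/σ² + e^{-2V_b})`.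
This yields half the stated constant.
-/

lemma abs_mul_sub_mul_le (u₁ u₂ v₁ v₂ : ℝ) :
    |u₁ * v₁ - u₂ * v₂| ≤ |u₁| * |v₁ - v₂| + |u₁ - u₂| * |v₂| := by
  calc |u₁ * v₁ - u₂ * v₂| = |u₁ * (v₁ - v₂) + (u₁ - u₂) * v₂| := by ring_nf
    _ ≤ |u₁| * |v₁ - v₂| + |u₁ - u₂| * |v₂| := by
      simpa only [abs_mul] using abs_add_le (u₁ * (v₁ - v₂)) ((u₁ - u₂) * v₂)

lemma abs_mul_sub_mul_le_of_abs_le {a₁ a₂ b₁ b₂ M : ℝ} (ha₁ : |a₁| ≤ M) (hb₂ : |b₂| ≤ M) :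
    |a₁ * b₁ - a₂ * b₂| ≤ M * (|a₁ - a₂| + |b₁ - b₂|) := by
  calc |a₁ * b₁ - a₂ * b₂| ≤ |a₁| * |b₁ - b₂| + |a₁ - a₂| * |b₂| := abs_mul_sub_mul_le ..
    _ ≤ M * |b₁ - b₂| + |a₁ - a₂| * M := by gcongr
    _ = M * (|a₁ - a₂| + |b₁ - b₂|) := by ring

lemma abs_mul_sub_sub_mul_sub_le {u₁ u₂ x₁ x₂ m B L c R δ : ℝ} (hu₁ : |u₁| ≤ B)
    (hx : |x₁ - x₂| ≤ L * δ) (hu : |u₁ - u₂| ≤ c * δ) (hx₂ : |x₂ - m| ≤ R) :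
    |u₁ * (x₁ - m) - u₂ * (x₂ - m)| ≤ (B * L + c * R) * δ := by
  have hB : 0 ≤ B := (abs_nonneg _).trans hu₁
  calc |u₁ * (x₁ - m) - u₂ * (x₂ - m)| ≤ |u₁| * |x₁ - x₂| + |u₁ - u₂| * |x₂ - m| :=
        (abs_mul_sub_mul_le _ _ _ _).trans_eq (by rw [sub_sub_sub_cancel_right])
    _ ≤ B * (L * δ) + c * δ * R := by
        gcongr
        exact (abs_nonneg _).trans hu
    _ = (B * L + c * R) * δ := by ring

section Truncation

variable {σ s t : ℝ}

lemma abs_div_one_add_mul_self_le_inv (hσ : 0 < σ) (ht : 0 ≤ t) :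
    |t / (1 + σ * t)| ≤ σ⁻¹ := by
  have hden : 0 < 1 + σ * t := by positivity
  rw [abs_of_nonneg (by positivity), div_le_iff₀ hden, mul_add, inv_mul_cancel_left₀ hσ.ne']
  linarith [inv_pos.2 hσ]

lemma abs_div_one_add_mul_self_sub_le (hσ : 0 ≤ σ) (hs : 0 ≤ s) (ht : 0 ≤ t) :
    |s / (1 + σ * s) - t / (1 + σ * t)| ≤ |s - t| := by
  have hs' : 0 < 1 + σ * s := by positivity
  have ht' : 0 < 1 + σ * t := by positivity
  have hden : 1 ≤ (1 + σ * s) * (1 + σ * t) := by nlinarith [mul_nonneg hσ hs, mul_nonneg hσ ht]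
  rw [div_sub_div _ _ hs'.ne' ht'.ne', abs_div, abs_of_pos (mul_pos hs' ht')]
  calc |s * (1 + σ * t) - (1 + σ * s) * t| / ((1 + σ * s) * (1 + σ * t))
      = |s - t| / ((1 + σ * s) * (1 + σ * t)) := by ring_nf
    _ ≤ |s - t| := div_le_self (abs_nonneg _) hden

end Truncation

theorem regularized_rate_lipschitz_general (F : ℝ → ℝ → ℝ) (c₁ c₂ σ Vb : ℝ)
    (hσ : 0 < σ)
    (hF_lip : ∀ a₁ b₁ a₂ b₂ : ℝ, |F a₁ b₁ - F a₂ b₂| ≤ c₁ * (|a₁ - a₂| + |b₁ - b₂|))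
    (hF_growth : ∀ a b : ℝ, |F a b| ≤ c₂ * (1 + |a| + |b|))
    (μn μp : ℝ) (hμn : 0 ≤ μn ∧ μn ≤ Real.exp (-Vb)) (hμp : 0 ≤ μp ∧ μp ≤ Real.exp (-Vb)) :
    ∀ n₁ p₁ n₂ p₂ : ℝ, 0 ≤ n₁ → 0 ≤ p₁ → 0 ≤ n₂ → 0 ≤ p₂ →
      |F (n₁ / (1 + σ * n₁)) (p₁ / (1 + σ * p₁)) *
          ((n₁ / (1 + σ * n₁)) * (p₁ / (1 + σ * p₁)) - μn * μp) -
        F (n₂ / (1 + σ * n₂)) (p₂ / (1 + σ * p₂)) *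
          ((n₂ / (1 + σ * n₂)) * (p₂ / (1 + σ * p₂)) - μn * μp)| ≤
      (2 * c₁ * Real.exp (-2 * Vb) + (2 * c₂ / σ) * (1 + 2 / σ) + 2 * c₁ / σ ^ 2) *
        (|n₁ - n₂| + |p₁ - p₂|) := by
  intro n₁ p₁ n₂ p₂ hn₁ hp₁ hn₂ hp₂
  have hc₁ : 0 ≤ c₁ := by simpa using (abs_nonneg _).trans (hF_lip 1 0 0 0)
  have hc₂ : 0 ≤ c₂ := by simpa using (abs_nonneg _).trans (hF_growth 0 0)
  have ha₁ := abs_div_one_add_mul_self_le_inv hσ hn₁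
  have hb₁ := abs_div_one_add_mul_self_le_inv hσ hp₁
  have ha₂ := abs_div_one_add_mul_self_le_inv hσ hn₂
  have hb₂ := abs_div_one_add_mul_self_le_inv hσ hp₂
  have hΔ := add_le_add (abs_div_one_add_mul_self_sub_le hσ.le hn₁ hn₂)
    (abs_div_one_add_mul_self_sub_le hσ.le hp₁ hp₂)
  set a₁ := n₁ / (1 + σ * n₁)
  set b₁ := p₁ / (1 + σ * p₁)
  set a₂ := n₂ / (1 + σ * n₂)
  set b₂ := p₂ / (1 + σ * p₂)
  set E := Real.exp (-Vb)
  have hE : Real.exp (-2 * Vb) = E * E := by rw [← Real.exp_add]; ring_nf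
  have hF₁ : |F a₁ b₁| ≤ c₂ * (1 + σ⁻¹ + σ⁻¹) := (hF_growth a₁ b₁).trans (by gcongr)
  have hprod : |a₁ * b₁ - a₂ * b₂| ≤ σ⁻¹ * (|a₁ - a₂| + |b₁ - b₂|) :=
    abs_mul_sub_mul_le_of_abs_le ha₁ hb₂
  have hrate₂ : |a₂ * b₂ - μn * μp| ≤ σ⁻¹ * σ⁻¹ + E * E := by
    refine (abs_sub _ _).trans ?_
    rw [abs_mul, abs_mul, abs_of_nonneg hμn.1, abs_of_nonneg hμp.1]
    gcongr <;> linarith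
  have hrate := abs_mul_sub_sub_mul_sub_le hF₁ hprod (hF_lip a₁ b₁ a₂ b₂) hrate₂
  have hK : 2 * c₁ * Real.exp (-2 * Vb) + (2 * c₂ / σ) * (1 + 2 / σ) + 2 * c₁ / σ ^ 2
      = 2 * (c₂ * (1 + σ⁻¹ + σ⁻¹) * σ⁻¹ + c₁ * (σ⁻¹ * σ⁻¹ + E * E)) := by
    rw [hE]; field_simp; ring
  refine hrate.trans ?_
  rw [hK]
  gcongr
  linarith [show 0 ≤ c₂ * (1 + σ⁻¹ + σ⁻¹) * σ⁻¹ + c₁ * (σ⁻¹ * σ⁻¹ + E * E) by positivity]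

theorem regularized_rate_lipschitz (F : ℝ → ℝ → ℝ) (c₁ c₂ σ Vb : ℝ)
    (hc₁ : 0 < c₁) (hc₂ : 0 < c₂) (hσ : 0 < σ)
    (hF_lip : ∀ a₁ b₁ a₂ b₂ : ℝ, |F a₁ b₁ - F a₂ b₂| ≤ c₁ * (|a₁ - a₂| + |b₁ - b₂|))
    (hF_growth : ∀ a b : ℝ, |F a b| ≤ c₂ * (1 + |a| + |b|))
    (μn μp : ℝ) (hμn : 0 ≤ μn ∧ μn ≤ Real.exp (-Vb)) (hμp : 0 ≤ μp ∧ μp ≤ Real.exp (-Vb)) :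
    ∀ n₁ p₁ n₂ p₂ : ℝ, 0 ≤ n₁ → 0 ≤ p₁ → 0 ≤ n₂ → 0 ≤ p₂ →
      |F (n₁ / (1 + σ * n₁)) (p₁ / (1 + σ * p₁)) *
          ((n₁ / (1 + σ * n₁)) * (p₁ / (1 + σ * p₁)) - μn * μp) -
        F (n₂ / (1 + σ * n₂)) (p₂ / (1 + σ * p₂)) *
          ((n₂ / (1 + σ * n₂)) * (p₂ / (1 + σ * p₂)) - μn * μp)| ≤
      (2 * c₁ * Real.exp (-2 * Vb) + (2 * c₂ / σ) * (1 + 2 / σ) + 2 * c₁ / σ ^ 2) *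
        (|n₁ - n₂| + |p₁ - p₂|) :=
  regularized_rate_lipschitz_general F c₁ c₂ σ Vb hσ hF_lip hF_growth μn μp hμn hμp
end
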